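/- Let G be a finite group with n elements and let d ≥ 2. Define Q : (Fin d → G) → G by Q x = x 0 * x 1 * ⋯ * x (d−1) (the ordered product). Then Q is a d-dimensional latin hypercube on the symbol set G, and the number of cuboctahedra of Q is exactly n^(3d−1). -/

import Mathlib

/-- A `d`-dimensional latin hypercube on a symbol set `S`: in each line all symbols
are distinct. -/
def IsLatinHypercubeOn {d : ℕ} {S : Type*} (Q : (Fin d → S) → S) : Prop :=
  ∀ (i : Fin d) (x : Fin d → S),
    Function.Bijective (fun v : S => Q (Function.update x i v))

/-- `(A, B)` is a cuboctahedron of the hypercube `Q` on the symbol set `S`. -/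
def IsCuboctOn {d : ℕ} {S : Type*} (Q : (Fin d → S) → S)
    (A B : Fin d → S × S) : Prop :=
  ∀ j : Fin d → Fin 2,
    Q (fun i => if j i = 0 then (A i).1 else (A i).2) =
    Q (fun i => if j i = 0 then (B i).1 else (B i).2)

/-- The number of cuboctahedra of the hypercube `Q` on the symbol set `S`. -/
noncomputable def cuboctCountOn {d : ℕ} {S : Type*} (Q : (Fin d → S) → S) : ℕ :=
  Set.ncard {p : (Fin d → S × S) × (Fin d → S × S) | IsCuboctOn Q p.1 p.2}

/-!
For `c : Fin (d + 1) → G`, the gauge transformation `xᵢ ↦ cᵢ xᵢ cᵢ₊₁⁻¹` changes the ordered product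
`x₀ ⋯ x_{d-1}` into `c₀ (x₀ ⋯ x_{d-1}) c_d⁻¹`. Hence applying one gauge with `c₀ = c_d = 1` to both
coordinates of `A` yields a cuboctahedron `(A, B)`. Conversely, comparing the vertex of first
coordinates with the vertices that switch a single coordinate shows that every cuboctahedron arises
this way, with `c_k = (b₀ ⋯ b_{k-1})⁻¹ (a₀ ⋯ a_{k-1})`. The gauge is determined by `A` and `B`
because `c₀ = 1`, so cuboctahedra correspond to `A` together with the `d - 1` free values
`c₁, …, c_{d-1}`: `n ^ (2d) * n ^ (d - 1)` of them.
-/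

section

open Function

variable {G : Type*} [Group G] {d : ℕ}

lemma Fin.partialProd_last {M : Type*} [Monoid M] (f : Fin d → M) :
    Fin.partialProd f (Fin.last d) = (List.ofFn f).prod := by
  simp [Fin.partialProd, List.take_of_length_le]

lemma List.ofFn_update {α : Type*} (x : Fin d → α) (i : Fin d) (v : α) :
    List.ofFn (update x i v) = (List.ofFn x).set i v :=
  List.ext_getElem (by simp) fun k _ _ => by
    simp [update_apply, List.getElem_set, Fin.ext_iff, eq_comm]

lemma prod_ofFn_update (x : Fin d → G) (i : Fin d) (v : G) :
    (List.ofFn (update x i v)).prod =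
      Fin.partialProd x i.castSucc * v * (Fin.partialProd x i.succ)⁻¹ * (List.ofFn x).prod := by
  have hsuffix : ((List.ofFn x).drop (i + 1)).prod =
      (Fin.partialProd x i.succ)⁻¹ * (List.ofFn x).prod := by
    rw [← List.prod_take_mul_prod_drop (List.ofFn x) (i + 1)]
    exact (inv_mul_cancel_left _ _).symm
  rw [List.ofFn_update, List.prod_set, if_pos (by simp), hsuffix]
  simp only [Fin.partialProd, Fin.val_castSucc, mul_assoc]

theorem isLatinHypercubeOn_prod_ofFn :
    IsLatinHypercubeOn (fun x : Fin d → G => (List.ofFn x).prod) := by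
  intro i x
  simp only [prod_ofFn_update]
  exact (Equiv.mulRight _).bijective.comp <| (Equiv.mulRight _).bijective.comp
    (Equiv.mulLeft _).bijective

def gaugeTransform (c : Fin (d + 1) → G) (x : Fin d → G) : Fin d → G :=
  fun i => c i.castSucc * x i * (c i.succ)⁻¹

lemma partialProd_gaugeTransform (c : Fin (d + 1) → G) (x : Fin d → G) (k : Fin (d + 1)) :
    Fin.partialProd (gaugeTransform c x) k = c 0 * Fin.partialProd x k * (c k)⁻¹ := by
  induction k using Fin.induction with
  | zero => simp
  | succ k ih => simp only [Fin.partialProd_succ, ih, gaugeTransform]; group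

lemma prod_ofFn_gaugeTransform (c : Fin (d + 1) → G) (x : Fin d → G) :
    (List.ofFn (gaugeTransform c x)).prod = c 0 * (List.ofFn x).prod * (c (Fin.last d))⁻¹ := by
  simp only [← Fin.partialProd_last, partialProd_gaugeTransform]

lemma gaugeTransform_left_injective {c c' : Fin (d + 1) → G} {x : Fin d → G}
    (h₀ : c 0 = c' 0) (h : gaugeTransform c x = gaugeTransform c' x) : c = c' := by
  funext k
  induction k using Fin.induction with
  | zero => exact h₀
  | succ k ih =>
    have := congrFun h k
    simp only [gaugeTransform, ih] at this
    exact inv_injective (mul_left_cancel this)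

section BoxVertex

variable {S : Type*}

def boxVertex (A : Fin d → S × S) (j : Fin d → Fin 2) : Fin d → S :=
  fun i => if j i = 0 then (A i).1 else (A i).2

lemma isCuboctOn_iff {Q : (Fin d → S) → S} {A B : Fin d → S × S} :
    IsCuboctOn Q A B ↔ ∀ j, Q (boxVertex A j) = Q (boxVertex B j) :=
  Iff.rfl

@[simp]
lemma boxVertex_zero (A : Fin d → S × S) : boxVertex A 0 = fun i => (A i).1 :=
  funext fun _ => if_pos rfl

lemma boxVertex_single (A : Fin d → S × S) (i : Fin d) :
    boxVertex A (Pi.single i 1) = update (fun k => (A k).1) i (A i).2 := by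
  funext k
  rcases eq_or_ne k i with rfl | hki
  · simp [boxVertex]
  · simp [boxVertex, hki]

end BoxVertex

lemma boxVertex_gaugeTransform (c : Fin (d + 1) → G) (A : Fin d → G × G) (j : Fin d → Fin 2) :
    boxVertex (gaugeTransform (fun k => (c k, c k)) A) j = gaugeTransform c (boxVertex A j) := by
  funext i
  by_cases hj : j i = 0 <;> simp [boxVertex, gaugeTransform, hj]

def cuboctGauge (a b : Fin d → G) (k : Fin (d + 1)) : G :=
  (Fin.partialProd b k)⁻¹ * Fin.partialProd a k

lemma eq_cuboctGauge_of_prod_ofFn_update_eq {a b : Fin d → G}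
    (hab : (List.ofFn a).prod = (List.ofFn b).prod) {i : Fin d} {v w : G}
    (h : (List.ofFn (update a i v)).prod = (List.ofFn (update b i w)).prod) :
    w = cuboctGauge a b i.castSucc * v * (cuboctGauge a b i.succ)⁻¹ := by
  rw [prod_ofFn_update, prod_ofFn_update, hab, mul_left_inj] at h
  calc w = (Fin.partialProd b i.castSucc)⁻¹ *
        (Fin.partialProd b i.castSucc * w * (Fin.partialProd b i.succ)⁻¹) *
          Fin.partialProd b i.succ := by group
    _ = _ := by rw [← h, cuboctGauge, cuboctGauge]; group

theorem isCuboctOn_prod_ofFn_iff {A B : Fin d → G × G} :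
    IsCuboctOn (fun x : Fin d → G => (List.ofFn x).prod) A B ↔
      ∃ c : Fin (d + 1) → G, c 0 = 1 ∧ c (Fin.last d) = 1 ∧
        B = gaugeTransform (fun k => (c k, c k)) A := by
  rw [isCuboctOn_iff]
  refine ⟨fun h => ?_, ?_⟩
  · set a : Fin d → G := fun i => (A i).1
    set b : Fin d → G := fun i => (B i).1
    have hab : (List.ofFn a).prod = (List.ofFn b).prod := by simpa using h 0
    refine ⟨cuboctGauge a b, by simp [cuboctGauge], ?_, funext fun i => ?_⟩
    · simp [cuboctGauge, Fin.partialProd_last, hab]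
    · refine Prod.ext (eq_cuboctGauge_of_prod_ofFn_update_eq hab ?_)
        (eq_cuboctGauge_of_prod_ofFn_update_eq hab ?_)
      · rwa [update_eq_self i a, update_eq_self i b]
      · simpa only [boxVertex_single] using h (Pi.single i 1)
  · rintro ⟨c, hc₀, hc_last, rfl⟩ j
    simp only [boxVertex_gaugeTransform, prod_ofFn_gaugeTransform, hc₀, hc_last, one_mul, inv_one,
      mul_one]

section Count

variable {m : ℕ}

def pinnedGauge (c : Fin m → G) : Fin (m + 2) → G :=
  Fin.cons 1 (Fin.snoc c 1)

lemma pinnedGauge_injective : Injective (pinnedGauge : (Fin m → G) → Fin (m + 2) → G) :=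
  (Fin.cons_right_injective _).comp (Fin.snoc_left_injective (α := fun _ => G) 1)

lemma exists_pinnedGauge_eq {c : Fin (m + 2) → G} (h₀ : c 0 = 1) (h_last : c (Fin.last _) = 1) :
    ∃ c' : Fin m → G, pinnedGauge c' = c := by
  refine ⟨Fin.init (Fin.tail c), ?_⟩
  conv_rhs => rw [← Fin.cons_self_tail c, ← Fin.snoc_init_self (Fin.tail c)]
  rw [pinnedGauge, h₀]
  congr
  exact h_last.symm

def cuboctOfGauge (p : (Fin (m + 1) → G × G) × (Fin m → G)) :
    (Fin (m + 1) → G × G) × (Fin (m + 1) → G × G) :=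
  (p.1, gaugeTransform (fun k => (pinnedGauge p.2 k, pinnedGauge p.2 k)) p.1)

lemma cuboctOfGauge_injective : Injective (cuboctOfGauge (G := G) (m := m)) := by
  rintro ⟨A, c⟩ ⟨A', c'⟩ h
  simp only [cuboctOfGauge, Prod.mk.injEq] at h
  obtain ⟨rfl, hB⟩ := h
  have hdiag := gaugeTransform_left_injective (by simp [pinnedGauge]) hB
  exact Prod.ext rfl (pinnedGauge_injective (funext fun k => congrArg Prod.fst (congrFun hdiag k)))

lemma range_cuboctOfGauge :
    Set.range (cuboctOfGauge (G := G) (m := m)) =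
      {p | IsCuboctOn (fun x : Fin (m + 1) → G => (List.ofFn x).prod) p.1 p.2} := by
  ext ⟨A, B⟩
  simp only [Set.mem_range, Set.mem_ofPred_eq, isCuboctOn_prod_ofFn_iff, Prod.exists,
    cuboctOfGauge, Prod.mk.injEq]
  constructor
  · rintro ⟨_, c, rfl, rfl⟩
    exact ⟨pinnedGauge c, rfl, by simp [pinnedGauge, ← Fin.succ_last], rfl⟩
  · rintro ⟨c, h₀, h_last, rfl⟩
    obtain ⟨c', rfl⟩ := exists_pinnedGauge_eq h₀ h_last
    exact ⟨A, c', rfl, rfl⟩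

end Count

theorem cuboctCountOn_prod_ofFn [Fintype G] (m : ℕ) :
    cuboctCountOn (fun x : Fin (m + 1) → G => (List.ofFn x).prod) =
      Fintype.card G ^ (3 * m + 2) := by
  rw [cuboctCountOn, ← range_cuboctOfGauge, Set.ncard_range_of_injective cuboctOfGauge_injective,
    Nat.card_eq_fintype_card]
  simp only [Fintype.card_prod, Fintype.card_fun, Fintype.card_fin]
  ring

end

/-- For a finite group `G` with `n` elements and `d ≥ 2`, the ordered-product map
`x ↦ x 0 * x 1 * ⋯ * x (d-1)` is a `d`-dimensional latin hypercube on `G` with exactly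
`n ^ (3d - 1)` cuboctahedra. -/
theorem iterated_group_cuboctCount (G : Type*) [Group G] [Fintype G]
    (n d : ℕ) (hG : Fintype.card G = n) (hd : 2 ≤ d) :
    IsLatinHypercubeOn (fun x : Fin d → G => (List.ofFn x).prod) ∧
    cuboctCountOn (fun x : Fin d → G => (List.ofFn x).prod) = n ^ (3 * d - 1) := by
  refine ⟨isLatinHypercubeOn_prod_ofFn, ?_⟩
  obtain ⟨m, rfl⟩ : ∃ m, d = m + 1 := ⟨d - 1, by omega⟩
  rw [cuboctCountOn_prod_ofFn, hG, show 3 * (m + 1) - 1 = 3 * m + 2 by omega]
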